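/- The Gaussian mechanism A(x) = f(x) + N(0, σ²) applied to a function f with l2 sensitivity S_f satisfies (q, q S_f²/(2σ²))-Rényi differential privacy for every q > 1. -/

import Mathlib

open Real

/-- Gaussian density with mean `μ` and variance `σ²` on `ℝ`. -/
noncomputable def gaussPDF (μ σ x : ℝ) : ℝ :=
  (1 / (σ * Real.sqrt (2 * π))) * Real.exp (-(x - μ) ^ 2 / (2 * σ ^ 2))

/-- Rényi divergence of order `q` between two densities on `ℝ`. -/
noncomputable def renyiDivPDF (q : ℝ) (p p' : ℝ → ℝ) : ℝ :=
  (1 / (q - 1)) * Real.log (∫ x : ℝ, p x ^ q * p' x ^ (1 - q))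

lemma integral_gaussPDF (μ σ : ℝ) (hσ : 0 < σ) : ∫ x : ℝ, gaussPDF μ σ x = 1 := by
  unfold gaussPDF
  rw [MeasureTheory.integral_const_mul]
  have h1 : ∀ x : ℝ, Real.exp (-(x - μ) ^ 2 / (2 * σ ^ 2))
      = Real.exp (-(1 / (2 * σ ^ 2)) * (x - μ) ^ 2) := by
    intro x; ring_nf
  simp_rw [h1]
  rw [MeasureTheory.integral_sub_right_eq_self
    (fun x : ℝ => Real.exp (-(1 / (2 * σ ^ 2)) * x ^ 2)) μ]
  rw [integral_gaussian]
  have h2 : π / (1 / (2 * σ ^ 2)) = σ ^ 2 * (2 * π) := by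
    field_simp
  rw [h2]
  have h3 : Real.sqrt (σ ^ 2 * (2 * π)) = σ * Real.sqrt (2 * π) := by
    rw [Real.sqrt_mul (by positivity : (0:ℝ) ≤ σ ^ 2), Real.sqrt_sq hσ.le]
  rw [h3]
  have hs : 0 < Real.sqrt (2 * π) := Real.sqrt_pos.mpr (by positivity)
  field_simp

lemma gaussPDF_rpow_mul (μ μ' σ q : ℝ) (hσ : 0 < σ) (x : ℝ) :
    gaussPDF μ σ x ^ q * gaussPDF μ' σ x ^ (1 - q)
      = gaussPDF (q * μ + (1 - q) * μ') σ x
        * Real.exp (q * (q - 1) * (μ - μ') ^ 2 / (2 * σ ^ 2)) := by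
  have hc : 0 < 1 / (σ * Real.sqrt (2 * π)) := by positivity
  unfold gaussPDF
  rw [Real.rpow_def_of_pos (by positivity), Real.rpow_def_of_pos (by positivity),
      Real.log_mul hc.ne' (Real.exp_pos _).ne', Real.log_exp,
      Real.log_mul hc.ne' (Real.exp_pos _).ne', Real.log_exp,
      ← Real.exp_add]
  conv_rhs => rw [show (1 : ℝ) / (σ * Real.sqrt (2 * π))
    = Real.exp (Real.log (1 / (σ * Real.sqrt (2 * π)))) from (Real.exp_log hc).symm]
  rw [← Real.exp_add, ← Real.exp_add]
  congr 1
  have hσ2 : (σ : ℝ) ^ 2 ≠ 0 := by positivity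
  field_simp
  ring

/-- the Gaussian mechanism `A(x) = f(x) + N(0, σ²)`, whose output on dataset
`D` is distributed with density `gaussPDF (f D) σ`, satisfies `(q, q S_f²/(2σ²))`-RDP for
every `q > 1`: the order-`q` Rényi divergence between outputs on adjacent datasets is at
most `q S_f²/(2σ²)`. -/
theorem gaussian_mechanism_rdp {Dataset : Type*} (adjacent : Dataset → Dataset → Prop)
    (f : Dataset → ℝ) (Sf σ : ℝ) (hσ : 0 < σ) (hSf : 0 ≤ Sf)
    (hsens : ∀ D D', adjacent D D' → |f D - f D'| ≤ Sf) :
    ∀ q : ℝ, 1 < q → ∀ D D', adjacent D D' →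
      renyiDivPDF q (gaussPDF (f D) σ) (gaussPDF (f D') σ) ≤ q * Sf ^ 2 / (2 * σ ^ 2) := by
  intro q hq D D' hadj
  unfold renyiDivPDF
  have hint : (∫ x : ℝ, gaussPDF (f D) σ x ^ q * gaussPDF (f D') σ x ^ (1 - q))
      = Real.exp (q * (q - 1) * (f D - f D') ^ 2 / (2 * σ ^ 2)) := by
    simp_rw [gaussPDF_rpow_mul (f D) (f D') σ q hσ]
    rw [MeasureTheory.integral_mul_const, integral_gaussPDF _ _ hσ, one_mul]
  rw [hint, Real.log_exp]
  have hq1 : (0 : ℝ) < q - 1 := sub_pos.mpr hq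
  have hΔ : (f D - f D') ^ 2 ≤ Sf ^ 2 := by
    have h := hsens D D' hadj
    calc (f D - f D') ^ 2 = |f D - f D'| ^ 2 := (sq_abs _).symm
      _ ≤ Sf ^ 2 := by gcongr
  have heq : (1 / (q - 1)) * (q * (q - 1) * (f D - f D') ^ 2 / (2 * σ ^ 2))
      = q * (f D - f D') ^ 2 / (2 * σ ^ 2) := by
    field_simp
  rw [heq]
  gcongr
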